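/- arXiv:1910.06963 — 2 statements merged into one kernel-verified Lean document; each statement's English description precedes it below -/
import Mathlib

section
/- Let n ≥ 2 be an integer and let x, x', y, y' ∈ ZMod n. Set Z := d(y', y). Then 2·d(y, x) + 2·d(x', y') + f(x, x') ≥ ⌊n/2⌋·⌊(n−1)/2⌋ + n − 1 − 2Z. -/
/-- `C2 x` is the binomial-type expression `x(x-1)/2`. -/
def C2 (x : ℤ) : ℤ := x * (x - 1) / 2

/-- `dz x y` is the least nonnegative residue of `y - x` modulo `n`. -/
def dz {n : ℕ} (x y : ZMod n) : ℕ := (y - x).val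

/-- `fz x y = C(d(x,y),2) + C(n - d(x,y),2)` for `x y : ZMod n`. -/
def fz {n : ℕ} (x y : ZMod n) : ℤ := C2 (dz x y) + C2 ((n : ℤ) - dz x y)

lemma two_C2 (x : ℤ) : 2 * C2 x = x * (x - 1) := by
  have h : (2:ℤ) ∣ x * (x - 1) := by
    obtain ⟨r, hr⟩ := Int.even_mul_succ_self (x - 1)
    exact ⟨r, by rw [mul_comm]; linarith [hr]⟩
  exact Int.mul_ediv_cancel' h

lemma key (n a b dd z g m q2 : ℤ) (hn : 2 ≤ n) (h0a : 0 ≤ a) (h0b : 0 ≤ b) (h0z : 0 ≤ z)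
    (hdd : 0 ≤ dd) (hddn : dd < n)
    (hcase : (a = 0 ∧ b = 0 ∧ dd = 0 ∧ z = 0) ∨ n ≤ a + b + dd + z)
    (hg : 2 * g = dd * (dd - 1) + (n - dd) * (n - dd - 1))
    (hm : (n = 2*m ∧ q2 = m - 1) ∨ (n = 2*m + 1 ∧ q2 = m)) :
    m * q2 + n - 1 - 2*z ≤ 2*a + 2*b + g := by
  rcases hcase with ⟨e1, e2, e3, e4⟩ | hge
  · subst e1 e2 e3 e4
    rcases hm with ⟨hm, hq⟩ | ⟨hm, hq⟩ <;>
      nlinarith [hg, sq_nonneg (m - 1), hm, hq]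
  · rcases hm with ⟨hm, hq⟩ | ⟨hm, hq⟩
    · nlinarith [hg, hge, sq_nonneg (dd - m - 1), hm, hq]
    · have hprod : (0:ℤ) ≤ (dd - m - 1) * (dd - m - 2) := by
        rcases le_or_gt dd (m + 1) with h | h
        · have := mul_nonneg (a := m + 1 - dd) (b := m + 2 - dd) (by linarith) (by linarith)
          nlinarith [this]
        · exact mul_nonneg (by linarith) (by linarith)
      nlinarith [hg, hge, hprod, hm, hq]

theorem stmt_5 (n : ℕ) (hn : 2 ≤ n) (x x' y y' : ZMod n) (Z : ℕ) (hZ : Z = dz y' y) :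
    ((n / 2 : ℕ) : ℤ) * (((n - 1) / 2 : ℕ) : ℤ) + n - 1 - 2 * Z ≤
      2 * (dz y x : ℤ) + 2 * (dz x' y' : ℤ) + fz x x' := by
  haveI : NeZero n := ⟨by omega⟩
  set a := dz y x with ha
  set b := dz x' y' with hb
  set D := dz x x' with hD
  have han : a < n := ZMod.val_lt _
  have hbn : b < n := ZMod.val_lt _
  have hDn : D < n := ZMod.val_lt _
  have hZn : Z < n := by rw [hZ]; exact ZMod.val_lt _
  have hdvd : n ∣ a + b + D + Z := by
    have : ((a + b + D + Z : ℕ) : ZMod n) = 0 := by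
      push_cast
      simp only [ha, hb, hD, hZ, dz, ZMod.natCast_val, ZMod.cast_id]
      ring
    exact (ZMod.natCast_eq_zero_iff _ _).mp this
  obtain ⟨k, hk⟩ := hdvd
  have h2g : 2 * fz x x' = (D:ℤ)*((D:ℤ)-1) + ((n:ℤ)-D)*((n:ℤ)-D-1) := by
    show 2 * (C2 (D:ℤ) + C2 ((n:ℤ) - D)) = _
    rw [mul_add, two_C2, two_C2]
  have hcase : ((a:ℤ) = 0 ∧ (b:ℤ) = 0 ∧ (D:ℤ) = 0 ∧ (Z:ℤ) = 0) ∨ (n:ℤ) ≤ (a:ℤ) + b + D + Z := by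
    rcases Nat.eq_zero_or_pos k with hk0 | hk1
    · left
      subst hk0
      simp only [Nat.mul_zero] at hk
      have : a = 0 ∧ b = 0 ∧ D = 0 ∧ Z = 0 := by omega
      exact_mod_cast this
    · right
      have : n ≤ a + b + D + Z := hk ▸ Nat.le_mul_of_pos_right n hk1
      exact_mod_cast this
  obtain ⟨m, hm⟩ : ∃ m, n = 2*m ∨ n = 2*m+1 := ⟨n/2, by omega⟩
  rcases hm with hm | hm
  · have hq1 : ((n/2 : ℕ) : ℤ) = (m:ℤ) := by omega
    have hq2 : (((n-1)/2 : ℕ) : ℤ) = (m:ℤ) - 1 := by omega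
    rw [hq1, hq2]
    exact key n a b D Z (fz x x') m ((m:ℤ)-1) (by exact_mod_cast hn)
      (by positivity) (by positivity) (by positivity) (by positivity)
      (by exact_mod_cast hDn) hcase h2g (Or.inl ⟨by exact_mod_cast hm, rfl⟩)
  · have hq1 : ((n/2 : ℕ) : ℤ) = (m:ℤ) := by omega
    have hq2 : (((n-1)/2 : ℕ) : ℤ) = (m:ℤ) := by omega
    rw [hq1, hq2]
    exact key n a b D Z (fz x x') m (m:ℤ) (by exact_mod_cast hn)
      (by positivity) (by positivity) (by positivity) (by positivity)
      (by exact_mod_cast hDn) hcase h2g (Or.inr ⟨by exact_mod_cast hm, rfl⟩)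
end

section
/- Let n ≥ 2 be an integer and let x, x', y, y' ∈ ZMod n with Z := d(y', y). If d(x', y') + d(y', y) + d(y, x) = d(x', x) (i.e., the cyclic order of the four points is x', y', y, x) and 2Z ≥ n, then 2·d(y, x) + 2·d(x', y') + f(x, x') ≥ ⌊n/2⌋·⌊(n−1)/2⌋ + n − 1 − 2Z + ⌊(2Z − n + 2)²/4⌋. -/
/-!
Write `D := d(x', x)`, so that `d(x, x') = n - D` and `f(x, x') = C(D,2) + C(n-D,2)`, while the
cyclic order gives `d(y, x) + d(x', y') = D - Z`. The right-hand side is therefore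
`g(D) := 2(D - Z) + C(D,2) + C(n-D,2)`, and `g(D) - g(Z) = (D - Z)(D + Z + 2 - n) ≥ 0` because
`D ≥ Z ≥ n/2`. Finally, the left-hand side is exactly `g(Z) = C(Z,2) + C(n-Z,2)`: writing
`n = 2p + r` and `Z = p + t`, both sides equal `p² - p + t²` for `r = 0` and `p² + t² - t` for `r = 1`.
-/

theorem two_mul_C2 (m : ℤ) : 2 * C2 m = m * (m - 1) :=
  Int.mul_ediv_cancel' (Int.even_mul_pred_self m).two_dvd

theorem C2_add_C2_sub_eq (n Z : ℤ) :
    C2 Z + C2 (n - Z) = n / 2 * ((n - 1) / 2) + n - 1 - 2 * Z + (2 * Z - n + 2) ^ 2 / 4 := by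
  have hZ := two_mul_C2 Z
  have hnZ := two_mul_C2 (n - Z)
  rcases Int.even_or_odd' n with ⟨p, rfl | rfl⟩
  · have hsq : (2 * Z - 2 * p + 2) ^ 2 / 4 = (Z - p + 1) ^ 2 := by
      rw [show (2 * Z - 2 * p + 2) ^ 2 = 4 * (Z - p + 1) ^ 2 by ring,
        Int.mul_ediv_cancel_left _ four_ne_zero]
    rw [hsq, show 2 * p / 2 = p by omega, show (2 * p - 1) / 2 = p - 1 by omega]
    linarith
  · have hsq : (2 * Z - (2 * p + 1) + 2) ^ 2 / 4 = (Z - p) ^ 2 + (Z - p) := by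
      rw [show (2 * Z - (2 * p + 1) + 2) ^ 2 = 4 * ((Z - p) ^ 2 + (Z - p)) + 1 by ring]
      omega
    rw [hsq, show (2 * p + 1) / 2 = p by omega, show (2 * p + 1 - 1) / 2 = p by omega]
    linarith

theorem C2_add_C2_sub_mono {n Z D : ℤ} (hZD : Z ≤ D) (hnZ : n ≤ 2 * Z) :
    2 * Z + C2 Z + C2 (n - Z) ≤ 2 * D + C2 D + C2 (n - D) := by
  have hprod : 0 ≤ (D - Z) * (D + Z + 2 - n) := mul_nonneg (by linarith) (by linarith)
  nlinarith [two_mul_C2 Z, two_mul_C2 (n - Z), two_mul_C2 D, two_mul_C2 (n - D)]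

theorem dz_add_dz {n : ℕ} [NeZero n] {x y : ZMod n} (h : x ≠ y) : dz x y + dz y x = n := by
  unfold dz
  rw [← neg_sub y x, ZMod.neg_val, if_neg (sub_ne_zero.2 h.symm)]
  have := ZMod.val_lt (y - x)
  omega

theorem fz_comm {n : ℕ} [NeZero n] (x y : ZMod n) : fz x y = fz y x := by
  rcases eq_or_ne x y with rfl | h
  · rfl
  have hyx : (dz y x : ℤ) = n - dz x y := by have := dz_add_dz h; omega
  rw [fz, fz, hyx, sub_sub_cancel, add_comm]

theorem stmt_7 (n : ℕ) (hn : 2 ≤ n) (x x' y y' : ZMod n) (Z : ℕ) (hZ : Z = dz y' y)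
    (horder : dz x' y' + dz y' y + dz y x = dz x' x) (hbig : n ≤ 2 * Z) :
    ((n / 2 : ℕ) : ℤ) * (((n - 1) / 2 : ℕ) : ℤ) + n - 1 - 2 * Z
      + (2 * (Z : ℤ) - n + 2) ^ 2 / 4 ≤
      2 * (dz y x : ℤ) + 2 * (dz x' y' : ℤ) + fz x x' := by
  have : NeZero n := ⟨by omega⟩
  have hhalf : ((n / 2 : ℕ) : ℤ) = (n : ℤ) / 2 := by omega
  have hhalf' : (((n - 1) / 2 : ℕ) : ℤ) = ((n : ℤ) - 1) / 2 := by omega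
  have hmono := C2_add_C2_sub_mono (n := n) (Z := Z) (D := dz x' x) (by omega) (by omega)
  rw [hhalf, hhalf', ← C2_add_C2_sub_eq, fz_comm, fz]
  omega
end
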